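/- There is a universal constant C > 0 such that the following holds. Let M ⊆ ℝ^d (d ≥ 1) be bounded and ε > 0. For every β > 1, the ball carving partition of M with parameter ε is (ε, β, C·d/β)-padded: every block has diameter ≤ ε, and for every x ∈ M, ℙ_{R,σ}[ B_{ε/β}(x) ∩ M ⊄ Π(x) ] ≤ C·d/β. -/

import Mathlib

/-!
Fix `x` and `ρ = ε/β`, and let `j` be the `σ`-first net point within `R + ρ` of `x`. If
`R > d(x, u j) + ρ`, the ball `B_ρ(x)` lies in the block of `u j`, since every earlier net point
is at distance `≥ R + ρ` from `x`. So failure forces `R` into a window of length `2ρ` around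
`d(x, u j)` (probability `8ρ/ε`) and `j` to come first in `σ` among the net points at least as
close to `x` as `u j` (probability `1/rank j`). Summing over the net points within `3ε/2` of `x`,
of which there are at most `13^d` by a volume argument, the failure probability is at most
`(8/β) H_{13^d} ≤ 104 d/β`.
-/

open MeasureTheory Metric Set
open scoped ENNReal NNReal

noncomputable section

/-- The Euclidean space `ℝ^d` with the `ℓ₂` metric. -/
abbrev Euc (d : ℕ) := EuclideanSpace ℝ (Fin d)

/-- The block `Π̂(uᵢ) = B_R(uᵢ) \ ⋃_{j : σ(j) < σ(i)} B_R(uⱼ)` of the ball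
carving partition built from the net `u`, radius `R` and order `σ`. -/
def carvBlock {d n : ℕ} (u : Fin n → Euc d) (R : ℝ) (σ : Equiv.Perm (Fin n))
    (i : Fin n) : Set (Euc d) :=
  ball (u i) R \ ⋃ j ∈ {j | σ j < σ i}, ball (u j) R

/-- The uniform probability measure on the interval `Ioc a b`. -/
def unifIoc (a b : ℝ) : Measure ℝ :=
  (volume (Set.Ioc a b))⁻¹ • volume.restrict (Set.Ioc a b)

instance (n : ℕ) : MeasurableSpace (Equiv.Perm (Fin n)) := ⊤

/-- The uniform probability measure on permutations of `Fin n` (a uniformly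
random linear order of the net). -/
def unifPerm (n : ℕ) : Measure (Equiv.Perm (Fin n)) :=
  (Measure.count (Set.univ : Set (Equiv.Perm (Fin n))))⁻¹ • Measure.count

/-- The joint distribution of the randomness `(R, σ)` of the ball carving
partition with parameter `ε`. -/
def carvMeasure (ε : ℝ) (n : ℕ) : Measure (ℝ × Equiv.Perm (Fin n)) :=
  (unifIoc (ε / 4) (ε / 2)).prod (unifPerm n)

open scoped Finset

section RandomOrder

variable {α : Type*} [Fintype α] [LinearOrder α]

def permsMinAt (Q : Finset α) (j : α) : Finset (Equiv.Perm α) :=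
  {σ | ∀ k ∈ Q, k ≠ j → σ j < σ k}

theorem mul_swap_mem_permsMinAt_iff {Q : Finset α} {i j : α} (hi : i ∈ Q) (hj : j ∈ Q)
    (σ : Equiv.Perm α) :
    σ * Equiv.swap j i ∈ permsMinAt Q j ↔ σ ∈ permsMinAt Q i := by
  simp only [permsMinAt, Finset.mem_filter, Finset.mem_univ, true_and, Equiv.Perm.mul_apply,
    Equiv.swap_apply_left]
  constructor
  · intro h k hk hki
    by_cases hkj : k = j
    · subst hkj
      simpa using h i hi (Ne.symm hki)
    · simpa [Equiv.swap_apply_of_ne_of_ne hkj hki] using h k hk hkj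
  · intro h k hk hkj
    by_cases hki : k = i
    · subst hki
      simpa using h j hj hkj.symm
    · simpa [Equiv.swap_apply_of_ne_of_ne hkj hki] using h k hk hki

theorem card_permsMinAt_eq {Q : Finset α} {i j : α} (hi : i ∈ Q) (hj : j ∈ Q) :
    #(permsMinAt Q i) = #(permsMinAt Q j) :=
  Finset.card_bij' (fun σ _ => σ * Equiv.swap j i) (fun σ _ => σ * Equiv.swap j i)
    (fun σ hσ => (mul_swap_mem_permsMinAt_iff hi hj σ).2 hσ)
    (fun σ hσ => (mul_swap_mem_permsMinAt_iff hi hj _).1 (by simpa [mul_assoc] using hσ))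
    (fun σ _ => by simp [mul_assoc]) (fun σ _ => by simp [mul_assoc])

theorem card_permsMinAt_mul_card {Q : Finset α} {j : α} (hj : j ∈ Q) :
    #(permsMinAt Q j) * #Q = Fintype.card (Equiv.Perm α) := by
  have hcover : Q.biUnion (permsMinAt Q) = Finset.univ := by
    refine Finset.eq_univ_of_forall fun σ => ?_
    obtain ⟨i, hi, hmin⟩ := Q.exists_min_image σ ⟨j, hj⟩
    simp only [Finset.mem_biUnion, permsMinAt, Finset.mem_filter, Finset.mem_univ, true_and]
    exact ⟨i, hi, fun k hk hki => (hmin k hk).lt_of_ne fun h => hki (σ.injective h.symm)⟩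
  have hdisj : (Q : Set α).PairwiseDisjoint (permsMinAt Q) := by
    intro i₁ h₁ i₂ h₂ hne
    refine Finset.disjoint_left.2 fun σ hσ₁ hσ₂ => ?_
    simp only [permsMinAt, Finset.mem_filter, Finset.mem_univ, true_and] at hσ₁ hσ₂
    exact (hσ₁ i₂ h₂ hne.symm).not_gt (hσ₂ i₁ h₁ hne)
  rw [← Finset.card_univ, ← hcover, Finset.card_biUnion hdisj,
    Finset.sum_congr rfl fun i hi => card_permsMinAt_eq hi hj, Finset.sum_const, smul_eq_mul,
    mul_comm]

end RandomOrder

instance (n : ℕ) : MeasurableSingletonClass (Equiv.Perm (Fin n)) :=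
  ⟨fun _ => MeasurableSpace.measurableSet_top⟩

theorem unifPerm_apply_finset {n : ℕ} (s : Finset (Equiv.Perm (Fin n))) :
    unifPerm n s = #s / Fintype.card (Equiv.Perm (Fin n)) := by
  rw [unifPerm, Measure.smul_apply, smul_eq_mul, Measure.count_apply_finset, Measure.count_univ,
    ENat.card_eq_coe_fintype_card, div_eq_mul_inv, mul_comm]
  rfl

theorem unifPerm_permsMinAt {n : ℕ} {Q : Finset (Fin n)} {j : Fin n} (hj : j ∈ Q) :
    unifPerm n (permsMinAt Q j) = (#Q : ℝ≥0∞)⁻¹ := by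
  have hperm : #(permsMinAt Q j) ≠ 0 := by
    intro h
    have := card_permsMinAt_mul_card hj
    rw [h, zero_mul] at this
    exact Fintype.card_ne_zero this.symm
  rw [unifPerm_apply_finset, ← card_permsMinAt_mul_card hj, Nat.cast_mul]
  nth_rw 1 [← mul_one (#(permsMinAt Q j) : ℝ≥0∞)]
  rw [ENNReal.mul_div_mul_left _ _ (by exact_mod_cast hperm) (by simp), one_div]

theorem unifIoc_compl (a b : ℝ) : unifIoc a b (Ioc a b)ᶜ = 0 := by
  rw [unifIoc, Measure.smul_apply, Measure.restrict_apply' measurableSet_Ioc,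
    compl_inter_self, measure_empty, smul_zero]

theorem unifIoc_Ioc_le {a b : ℝ} (hab : a < b) (c d : ℝ) :
    unifIoc a b (Ioc c d) ≤ ENNReal.ofReal ((d - c) / (b - a)) := by
  rw [unifIoc, Measure.smul_apply, smul_eq_mul, Measure.restrict_apply' measurableSet_Ioc,
    Real.volume_Ioc, ENNReal.ofReal_div_of_pos (sub_pos.2 hab), div_eq_mul_inv, mul_comm]
  gcongr
  exact (measure_mono inter_subset_left).trans_eq (Real.volume_Ioc ..)

theorem sum_inv_card_filter_le_eq_harmonic {ι β : Type*} [DecidableEq ι] [LinearOrder β]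
    {f : ι → β} (hf : Function.Injective f) (T : Finset ι) :
    ∑ j ∈ T, (#{k ∈ T | f k ≤ f j} : ℝ)⁻¹ = harmonic #T := by
  induction T using Finset.induction_on_max_value f with
  | empty => simp
  | insert a s ha hmax ih =>
    have hrest : ∀ j ∈ s, {k ∈ insert a s | f k ≤ f j} = {k ∈ s | f k ≤ f j} := by
      intro j hj
      have hja : j ≠ a := fun h => ha (h ▸ hj)
      rw [Finset.filter_insert, if_neg fun h => hja (hf ((hmax j hj).antisymm h))]
    have htop : {k ∈ insert a s | f k ≤ f a} = insert a s :=
      Finset.filter_true_of_mem fun k hk =>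
        (Finset.mem_insert.1 hk).elim (fun h => h ▸ le_rfl) (hmax k)
    rw [Finset.sum_insert ha, htop, Finset.sum_congr rfl fun j hj => by rw [hrest j hj], ih,
      Finset.card_insert_of_notMem ha, harmonic_succ]
    push_cast
    ring

theorem card_mul_pow_le_of_separated {E ι : Type*} [NormedAddCommGroup E] [NormedSpace ℝ E]
    [FiniteDimensional ℝ E] (T : Finset ι) (u : ι → E) (x : E) {s D : ℝ} (hs : 0 < s)
    (hD : 0 ≤ D) (hsep : ∀ i ∈ T, ∀ j ∈ T, i ≠ j → 2 * s ≤ dist (u i) (u j))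
    (hin : ∀ i ∈ T, dist (u i) x < D) :
    (#T : ℝ) * s ^ Module.finrank ℝ E ≤ (D + s) ^ Module.finrank ℝ E := by
  borelize E
  set μ : Measure E := Measure.addHaar
  have hdisj : (T : Set ι).PairwiseDisjoint fun i => ball (u i) s := fun i hi j hj hij =>
    ball_disjoint_ball (by linarith [hsep i hi j hj hij])
  have hsub : (⋃ i ∈ T, ball (u i) s) ⊆ ball x (D + s) := by
    simp only [iUnion_subset_iff]
    intro i hi y hy
    rw [mem_ball] at hy ⊢
    linarith [dist_triangle y (u i) x, hin i hi]
  have hvol : ∑ i ∈ T, μ (ball (u i) s) ≤ μ (ball x (D + s)) := by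
    rw [← measure_biUnion_finset hdisj fun _ _ => measurableSet_ball]
    exact measure_mono hsub
  rw [Finset.sum_congr rfl fun i _ => Measure.addHaar_ball_of_pos μ (u i) hs,
    Measure.addHaar_ball_of_pos μ x (by linarith),
    Finset.sum_const, nsmul_eq_mul, ← mul_assoc,
    ENNReal.mul_le_mul_iff_left (measure_ball_pos μ _ one_pos).ne' measure_ball_lt_top.ne,
    ← ENNReal.ofReal_natCast, ← ENNReal.ofReal_mul (by positivity),
    ENNReal.ofReal_le_ofReal_iff (by positivity)] at hvol
  exact hvol

theorem harmonic_le_one_add_mul_log_of_le_pow {m d : ℕ} {b : ℝ} (hb : 1 ≤ b)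
    (hm : (m : ℝ) ≤ b ^ d) : (harmonic m : ℝ) ≤ 1 + d * Real.log b := by
  have hlog : Real.log m ≤ d * Real.log b := by
    rcases m.eq_zero_or_pos with rfl | hm0
    · simpa using mul_nonneg (Nat.cast_nonneg d) (Real.log_nonneg hb)
    · rw [← Real.log_pow]
      exact Real.log_le_log (by exact_mod_cast hm0) hm
  linarith [harmonic_le_one_add_log m]

section BallCarving

variable {d n : ℕ} (u : Fin n → Euc d)

theorem ediam_carvBlock_le (R : ℝ) (σ : Equiv.Perm (Fin n)) (i : Fin n) :
    Metric.ediam (carvBlock u R σ i) ≤ ENNReal.ofReal (2 * R) :=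
  Metric.ediam_le_of_forall_dist_le fun y hy z hz => by
    linarith [dist_triangle_right y z (u i), mem_ball.1 hy.1, mem_ball.1 hz.1]

theorem ball_subset_carvBlock {x : Euc d} {ρ R : ℝ} {σ : Equiv.Perm (Fin n)} {i : Fin n}
    (hi : dist x (u i) + ρ ≤ R) (hprior : ∀ k, σ k < σ i → R + ρ ≤ dist x (u k)) :
    ball x ρ ⊆ carvBlock u R σ i := by
  intro y hy
  rw [mem_ball'] at hy
  refine ⟨mem_ball.2 (by linarith [dist_triangle_left y (u i) x]), ?_⟩
  simp only [mem_iUnion, mem_ball, not_exists, not_lt]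
  intro k hk
  linarith [hprior k hk, dist_triangle x y (u k)]

-- Ties are broken by the index so that distinct net points get distinct ranks.
def closerNetPoints (x : Euc d) (j : Fin n) : Finset (Fin n) :=
  {k | toLex (dist x (u k), k) ≤ toLex (dist x (u j), j)}

theorem self_mem_closerNetPoints (x : Euc d) (j : Fin n) : j ∈ closerNetPoints u x j := by
  simp [closerNetPoints]

theorem exists_mem_permsMinAt_of_not_ball_subset {x : Euc d} {ρ R : ℝ}
    {σ : Equiv.Perm (Fin n)} (hcov : ∃ k, dist x (u k) < R + ρ)
    (hfail : ¬ ∃ i, ball x ρ ⊆ carvBlock u R σ i) :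
    ∃ j, R ∈ Ioc (dist x (u j) - ρ) (dist x (u j) + ρ) ∧
      σ ∈ permsMinAt (closerNetPoints u x j) j := by
  set S : Finset (Fin n) := {k | dist x (u k) < R + ρ}
  obtain ⟨k₀, hk₀⟩ := hcov
  obtain ⟨j, hjS, hmin⟩ := S.exists_min_image σ ⟨k₀, by simpa [S] using hk₀⟩
  simp only [S, Finset.mem_filter, Finset.mem_univ, true_and] at hjS hmin
  refine ⟨j, ⟨by linarith, not_lt.1 fun hfar => hfail ⟨j, ?_⟩⟩, ?_⟩
  · refine ball_subset_carvBlock u hfar.le fun k hk => not_lt.1 fun hkS => ?_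
    exact (hmin k hkS).not_gt hk
  · simp only [permsMinAt, closerNetPoints, Finset.mem_filter, Finset.mem_univ, true_and]
    intro k hk hkj
    have hdk : dist x (u k) ≤ dist x (u j) := (Prod.Lex.le_iff.1 hk).elim le_of_lt (·.1.le)
    exact (hmin k (by linarith)).lt_of_ne fun h => hkj (σ.injective h.symm)

theorem sum_inv_card_closerNetPoints (x : Euc d) (r : ℝ) :
    ∑ j ∈ ({j | dist x (u j) < r} : Finset (Fin n)), (#(closerNetPoints u x j) : ℝ)⁻¹ =
      harmonic #{j | dist x (u j) < r} := by
  rw [← sum_inv_card_filter_le_eq_harmonic (f := fun k => toLex (dist x (u k), k))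
    (fun a b h => congrArg Prod.snd (toLex.injective h))]
  refine Finset.sum_congr rfl fun j hj => ?_
  simp only [Finset.mem_filter, Finset.mem_univ, true_and] at hj
  congr 3
  ext k
  simp only [closerNetPoints, Finset.mem_filter, Finset.mem_univ, true_and]
  refine ⟨fun hk => ⟨?_, hk⟩, And.right⟩
  have hdk : dist x (u k) ≤ dist x (u j) := (Prod.Lex.le_iff.1 hk).elim le_of_lt (·.1.le)
  linarith

theorem setOf_not_ball_subset_carvBlock_subset {x : Euc d} {ε ρ : ℝ} (hρ : 0 ≤ ρ)
    (hcov : ∃ k, dist x (u k) < ε / 4) :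
    {p : ℝ × Equiv.Perm (Fin n) | ¬ ∃ i, ball x ρ ⊆ carvBlock u p.1 p.2 i} ⊆
      (Ioc (ε / 4) (ε / 2))ᶜ ×ˢ univ ∪
        ⋃ j ∈ ({j | dist x (u j) < ε / 2 + ρ} : Finset (Fin n)),
          Ioc (dist x (u j) - ρ) (dist x (u j) + ρ) ×ˢ
            permsMinAt (closerNetPoints u x j) j := by
  rintro ⟨R, σ⟩ hfail
  by_cases hR : R ∈ Ioc (ε / 4) (ε / 2)
  · obtain ⟨k, hk⟩ := hcov
    obtain ⟨j, hRj, hσj⟩ :=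
      exists_mem_permsMinAt_of_not_ball_subset u ⟨k, by linarith [hR.1]⟩ hfail
    have hj : j ∈ ({j | dist x (u j) < ε / 2 + ρ} : Finset (Fin n)) := by
      simp only [Finset.mem_filter, Finset.mem_univ, true_and]
      linarith [hRj.1, hR.2]
    exact Or.inr (mem_biUnion hj ⟨hRj, hσj⟩)
  · exact Or.inl ⟨hR, trivial⟩

theorem carvMeasure_Ioc_prod_permsMinAt_le {x : Euc d} {ε ρ : ℝ} (hε : 0 < ε) (hρ : 0 < ρ)
    (j : Fin n) :
    carvMeasure ε n
        (Ioc (dist x (u j) - ρ) (dist x (u j) + ρ) ×ˢ permsMinAt (closerNetPoints u x j) j) ≤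
      ENNReal.ofReal (8 * ρ / ε * (#(closerNetPoints u x j) : ℝ)⁻¹) := by
  rw [carvMeasure, Measure.prod_prod, unifPerm_permsMinAt (self_mem_closerNetPoints u x j),
    ENNReal.ofReal_mul (by positivity), ENNReal.ofReal_inv_of_pos
      (by exact_mod_cast Finset.card_pos.2 ⟨j, self_mem_closerNetPoints u x j⟩),
    ENNReal.ofReal_natCast]
  gcongr
  refine (unifIoc_Ioc_le (by linarith) _ _).trans_eq (congrArg _ ?_)
  field_simp
  ring

theorem carvMeasure_not_ball_subset_le {x : Euc d} {ε ρ : ℝ} (hε : 0 < ε) (hρ : 0 < ρ)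
    (hcov : ∃ k, dist x (u k) < ε / 4) :
    carvMeasure ε n {p | ¬ ∃ i, ball x ρ ⊆ carvBlock u p.1 p.2 i} ≤
      ENNReal.ofReal (8 * ρ / ε * harmonic #{j | dist x (u j) < ε / 2 + ρ}) := by
  set T : Finset (Fin n) := {j | dist x (u j) < ε / 2 + ρ}
  calc _ ≤ carvMeasure ε n ((Ioc (ε / 4) (ε / 2))ᶜ ×ˢ univ) + ∑ j ∈ T, carvMeasure ε n
          (Ioc (dist x (u j) - ρ) (dist x (u j) + ρ) ×ˢ permsMinAt (closerNetPoints u x j) j) :=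
        (measure_mono (setOf_not_ball_subset_carvBlock_subset u hρ.le hcov)).trans <|
          (measure_union_le _ _).trans (add_le_add_right (measure_biUnion_finset_le _ _) _)
    _ ≤ 0 + ∑ j ∈ T,
          ENNReal.ofReal (8 * ρ / ε * (#(closerNetPoints u x j) : ℝ)⁻¹) := by
      rw [carvMeasure, Measure.prod_prod, unifIoc_compl, zero_mul, ← carvMeasure]
      gcongr with j
      exact carvMeasure_Ioc_prod_permsMinAt_le u hε hρ j
    _ = _ := by
      rw [zero_add, ← ENNReal.ofReal_sum_of_nonneg fun _ _ => by positivity, ← Finset.mul_sum,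
        sum_inv_card_closerNetPoints]

theorem card_dist_lt_le_pow {x : Euc d} {ε ρ : ℝ} (hε : 0 < ε) (hρε : ρ ≤ ε)
    (hsep : ∀ i j, i ≠ j → ε / 4 ≤ dist (u i) (u j)) :
    (#{j | dist x (u j) < ε / 2 + ρ} : ℝ) ≤ 13 ^ d := by
  have hpack := card_mul_pow_le_of_separated {j | dist x (u j) < ε / 2 + ρ} u x
    (s := ε / 8) (D := 3 * ε / 2) (by positivity) (by positivity)
    (fun i _ j _ hij => by linarith [hsep i j hij])
    (fun i hi => by
      simp only [Finset.mem_filter, Finset.mem_univ, true_and] at hi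
      rw [dist_comm]
      linarith)
  rw [finrank_euclideanSpace_fin, show 3 * ε / 2 + ε / 8 = 13 * (ε / 8) by ring,
    mul_pow] at hpack
  exact le_of_mul_le_mul_right hpack (by positivity)

end BallCarving

/-- Corollary 2: there is a universal constant `C > 0` such that for every
bounded `M ⊆ ℝ^d` (`d ≥ 1`), every `ε > 0` and every `β > 1`, the ball carving
partition of `M` with parameter `ε` (built from a finite `ε/4`-net
`u : Fin n → ℝ^d` of `M`) is `(ε, β, C·d/β)`-padded: every block has diameter
at most `ε`, and for every `x ∈ M` the probability that `B_{ε/β}(x) ∩ M` is not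
contained in the block of `x` is at most `C·d/β`. -/
theorem stmt10 : ∃ C : ℝ, 0 < C ∧
    ∀ (d n : ℕ), 1 ≤ d →
    ∀ M : Set (Euc d), Bornology.IsBounded M →
    ∀ (ε β : ℝ), 0 < ε → 1 < β →
    ∀ u : Fin n → Euc d, (∀ i, u i ∈ M) →
    (∀ i j, i ≠ j → ε / 4 ≤ dist (u i) (u j)) →
    M ⊆ (⋃ i, ball (u i) (ε / 4)) →
    ((∀ R ∈ Set.Ioc (ε / 4) (ε / 2), ∀ (σ : Equiv.Perm (Fin n)) (i : Fin n),
        EMetric.diam (carvBlock u R σ i) ≤ ENNReal.ofReal ε) ∧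
      ∀ x ∈ M, carvMeasure ε n
          {p | ¬ ∃ i, ball x (ε / β) ∩ M ⊆ carvBlock u p.1 p.2 i} ≤
        ENNReal.ofReal (C * d / β)) := by
  refine ⟨104, by norm_num, fun d n hd M _ ε β hε hβ u _ hsep hcov =>
    ⟨?_, fun x hx => ?_⟩⟩
  · exact fun R hR σ i =>
      (ediam_carvBlock_le u R σ i).trans (ENNReal.ofReal_le_ofReal (by linarith [hR.2]))
  have hρ : 0 < ε / β := by positivity
  have hρε : ε / β ≤ ε := div_le_self hε.le hβ.le
  set T : Finset (Fin n) := {j | dist x (u j) < ε / 2 + ε / β}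
  have hharm : (harmonic #T : ℝ) ≤ 13 * d := by
    have hlog : Real.log 13 ≤ 12 := by
      linarith [Real.log_le_sub_one_of_pos (by norm_num : (0 : ℝ) < 13)]
    have hd' : (1 : ℝ) ≤ d := by exact_mod_cast hd
    nlinarith [harmonic_le_one_add_mul_log_of_le_pow (by norm_num)
      (card_dist_lt_le_pow u (x := x) hε hρε hsep)]
  calc _ ≤ carvMeasure ε n {p | ¬ ∃ i, ball x (ε / β) ⊆ carvBlock u p.1 p.2 i} :=
        measure_mono <| ofPred_subset_ofPred.2 fun p hp ⟨i, hi⟩ =>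
          hp ⟨i, inter_subset_left.trans hi⟩
    _ ≤ ENNReal.ofReal (8 * (ε / β) / ε * harmonic #T) :=
        carvMeasure_not_ball_subset_le u hε hρ (by simpa using hcov hx)
    _ ≤ ENNReal.ofReal (8 * (ε / β) / ε * (13 * d)) := by gcongr
    _ = ENNReal.ofReal (104 * d / β) := by congr 1; field_simp; ring
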